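/- arXiv:2201.01320 — 3 statements merged into one kernel-verified Lean document; each statement's English description precedes it below -/
import Mathlib

section
/- Fix quadrature nodes z_1,…,z_{N−1} ∈ ℂ with derivatives z'_1,…,z'_{N−1} ∈ ℂ, a time T > 0, and a constant c > 0. For each j let û(z_j;μ) solve (z_j I − A(μ)) û(z_j;μ) = u_0(μ) + b̂(z_j;μ), and let û_r(z_j;μ) ∈ V be the Galerkin solution in a fixed N_r-dimensional subspace V ⊂ ℂ^{N_h}. Define u(T;μ) = (c/(iN)) Σ_{j=1}^{N−1} e^{z_j T} û(z_j;μ) z'_j and u_r(T;μ) = (c/(iN)) Σ_{j=1}^{N−1} e^{z_j T} û_r(z_j;μ) z'_j. If for each j the coercivity constant α_j(μ) = inf_{‖w‖=1} |w*(z_j I − A(μ))w| is positive and γ_j(μ) = ‖z_j I − A(μ)‖₂, and if for every j the best-approximation error satisfies inf_{v∈V} ‖û(z_j;μ) − v‖ ≤ d, then ‖u(T;μ) − u_r(T;μ)‖ ≤ d · (c/N) Σ_{j=1}^{N−1} e^{Re(z_j) T} |z'_j| (1 + γ_j(μ)/α_j(μ)). -/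
noncomputable def toES {𝕜 : Type*} [RCLike 𝕜] {n : ℕ} (v : Fin n → 𝕜) :
    EuclideanSpace 𝕜 (Fin n) := (WithLp.equiv 2 (Fin n → 𝕜)).symm v

noncomputable def fromES {𝕜 : Type*} [RCLike 𝕜] {n : ℕ} (v : EuclideanSpace 𝕜 (Fin n)) :
    Fin n → 𝕜 := WithLp.equiv 2 (Fin n → 𝕜) v

/-- Action of a matrix on Euclidean space. -/
noncomputable def mvES {𝕜 : Type*} [RCLike 𝕜] {n : ℕ} (M : Matrix (Fin n) (Fin n) 𝕜)
    (v : EuclideanSpace 𝕜 (Fin n)) : EuclideanSpace 𝕜 (Fin n) := toES (M.mulVec (fromES v))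

noncomputable def cvec {n : ℕ} (v : EuclideanSpace ℝ (Fin n)) : EuclideanSpace ℂ (Fin n) :=
  toES (fun i => Complex.ofReal (fromES v i))

def cmat {m n : ℕ} (M : Matrix (Fin m) (Fin n) ℝ) : Matrix (Fin m) (Fin n) ℂ :=
  M.map Complex.ofReal

/-- Spectral (operator) norm of a complex matrix. -/
noncomputable def specNorm {n : ℕ} (M : Matrix (Fin n) (Fin n) ℂ) : ℝ :=
  ‖Matrix.toEuclideanCLM (𝕜 := ℂ) M‖

/-- Coercivity constant of a complex matrix: the distance of the origin from its
numerical range. -/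
noncomputable def coer {n : ℕ} (M : Matrix (Fin n) (Fin n) ℂ) : ℝ :=
  ⨅ w : {w : EuclideanSpace ℂ (Fin n) // ‖w‖ = 1},
    ‖inner (𝕜 := ℂ) (w : EuclideanSpace ℂ (Fin n)) (mvES M w)‖

/-! Each Laplace-domain error obeys Céa's lemma: for `v ∈ V` and `e = û_r - v`, Galerkin
orthogonality gives `⟪e, M e⟫ = ⟪e, M (û - v)⟫` with `M = z_j I - A`, so coercivity and
boundedness of `M` give `‖e‖ ≤ (γ_j / α_j) ‖û - v‖`, hence `‖û - û_r‖ ≤ (1 + γ_j / α_j) d`.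
The quadrature error is then bounded term by term by the triangle inequality, using
`|e^{z_j T}| = e^{Re(z_j) T}`. -/

open scoped InnerProductSpace

section Galerkin

variable {𝕜 E : Type*} [RCLike 𝕜] [NormedAddCommGroup E] [InnerProductSpace 𝕜 E]

theorem mul_norm_sq_le_norm_inner_of_forall_norm_eq_one (L : E →L[𝕜] E) {α : ℝ}
    (hα : ∀ w : E, ‖w‖ = 1 → α ≤ ‖⟪w, L w⟫_𝕜‖) (v : E) :
    α * ‖v‖ ^ 2 ≤ ‖⟪v, L v⟫_𝕜‖ := by
  rcases eq_or_ne v 0 with rfl | hv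
  · simp
  have hscale :
      ‖⟪(‖v‖⁻¹ : 𝕜) • v, L ((‖v‖⁻¹ : 𝕜) • v)⟫_𝕜‖ = ‖⟪v, L v⟫_𝕜‖ / ‖v‖ ^ 2 := by
    rw [map_smul, inner_smul_left, inner_smul_right, norm_mul, norm_mul, RCLike.norm_conj,
      norm_inv, RCLike.norm_ofReal, abs_norm]
    ring
  have := hα _ (norm_smul_inv_norm (𝕜 := 𝕜) hv)
  rwa [hscale, le_div_iff₀ (by positivity)] at this

/-- Céa's lemma. -/
theorem norm_sub_le_of_galerkin (L : E →L[𝕜] E) {α : ℝ} (hα : 0 < α)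
    (hcoer : ∀ v : E, α * ‖v‖ ^ 2 ≤ ‖⟪v, L v⟫_𝕜‖) {V : Submodule 𝕜 E} {u ur : E}
    (hur : ur ∈ V) (horth : ∀ ζ ∈ V, ⟪L ur, ζ⟫_𝕜 = ⟪L u, ζ⟫_𝕜) {v : E} (hv : v ∈ V) :
    ‖u - ur‖ ≤ (1 + ‖L‖ / α) * ‖u - v‖ := by
  set e := ur - v
  have horth_e : ⟪e, L (u - ur)⟫_𝕜 = 0 := by
    rw [← inner_conj_symm, map_sub, inner_sub_left, horth e (V.sub_mem hur hv), sub_self,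
      map_zero]
  have hLe : L e = L (u - v) - L (u - ur) := by
    simp only [e, map_sub]
    abel
  have hsq : α * ‖e‖ ^ 2 ≤ ‖e‖ * (‖L‖ * ‖u - v‖) :=
    calc α * ‖e‖ ^ 2 ≤ ‖⟪e, L e⟫_𝕜‖ := hcoer e
      _ = ‖⟪e, L (u - v)⟫_𝕜‖ := by rw [hLe, inner_sub_right, horth_e, sub_zero]
      _ ≤ ‖e‖ * ‖L (u - v)‖ := norm_inner_le_norm _ _
      _ ≤ ‖e‖ * (‖L‖ * ‖u - v‖) := by gcongr; exact L.le_opNorm _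
  have he : ‖e‖ ≤ ‖L‖ / α * ‖u - v‖ := by
    rw [div_mul_eq_mul_div, le_div_iff₀ hα]
    rcases (norm_nonneg e).eq_or_lt with he | he
    · rw [← he, zero_mul]; positivity
    · nlinarith
  calc ‖u - ur‖ = ‖(u - v) - e‖ := by simp only [e]; abel_nf
    _ ≤ ‖u - v‖ + ‖e‖ := norm_sub_le _ _
    _ ≤ (1 + ‖L‖ / α) * ‖u - v‖ := by linarith

theorem norm_sub_le_iInf_of_galerkin (L : E →L[𝕜] E) {α : ℝ} (hα : 0 < α)
    (hcoer : ∀ v : E, α * ‖v‖ ^ 2 ≤ ‖⟪v, L v⟫_𝕜‖) {V : Submodule 𝕜 E} {u ur : E}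
    (hur : ur ∈ V) (horth : ∀ ζ ∈ V, ⟪L ur, ζ⟫_𝕜 = ⟪L u, ζ⟫_𝕜) :
    ‖u - ur‖ ≤ (1 + ‖L‖ / α) * ⨅ v : V, ‖u - (v : E)‖ := by
  rw [Real.mul_iInf_of_nonneg (by positivity)]
  exact le_ciInf fun v => norm_sub_le_of_galerkin L hα hcoer hur horth v.2

end Galerkin

theorem coer_mul_norm_sq_le {n : ℕ} (M : Matrix (Fin n) (Fin n) ℂ)
    (v : EuclideanSpace ℂ (Fin n)) :
    coer M * ‖v‖ ^ 2 ≤ ‖⟪v, Matrix.toEuclideanCLM (𝕜 := ℂ) M v⟫_ℂ‖ := by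
  refine mul_norm_sq_le_norm_inner_of_forall_norm_eq_one _ (fun w hw => ?_) v
  have hbdd : BddBelow (Set.range fun w : {w : EuclideanSpace ℂ (Fin n) // ‖w‖ = 1} =>
      ‖⟪(w : EuclideanSpace ℂ (Fin n)), mvES M w⟫_ℂ‖) :=
    ⟨0, by rintro _ ⟨_, rfl⟩; exact norm_nonneg _⟩
  exact ciInf_le hbdd ⟨w, hw⟩

theorem norm_smul_sum_sub_smul_sum_le {ι 𝕜 E : Type*} [Fintype ι] [NormedField 𝕜]
    [SeminormedAddCommGroup E] [NormedSpace 𝕜 E] (a : 𝕜) (w : ι → 𝕜) (x y : ι → E) :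
    ‖a • ∑ j, w j • x j - a • ∑ j, w j • y j‖ ≤ ‖a‖ * ∑ j, ‖w j‖ * ‖x j - y j‖ := by
  simp only [← smul_sub, ← Finset.sum_sub_distrib, norm_smul]
  gcongr
  exact (norm_sum_le _ _).trans_eq (by simp only [norm_smul])

theorem quadrature_galerkin_error_bound_general
    (Nh N : ℕ) (T : ℝ) (c : ℝ) (hc : 0 < c)
    (z z' : Fin (N - 1) → ℂ)
    (A : Matrix (Fin Nh) (Fin Nh) ℝ)
    (u0 : EuclideanSpace ℝ (Fin Nh))
    (bhat : Fin (N - 1) → EuclideanSpace ℂ (Fin Nh))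
    (V : Submodule ℂ (EuclideanSpace ℂ (Fin Nh)))
    (uhat uhatr : Fin (N - 1) → EuclideanSpace ℂ (Fin Nh))
    -- `û(z_j;μ)` solves `(z_j I - A(μ)) û(z_j;μ) = u₀(μ) + b̂(z_j;μ)`
    (huhat : ∀ j, mvES (z j • (1 : Matrix (Fin Nh) (Fin Nh) ℂ) - cmat A) (uhat j)
      = cvec u0 + bhat j)
    -- `û_r(z_j;μ) ∈ V` is the Galerkin solution
    (huhatrV : ∀ j, uhatr j ∈ V)
    (hGalerkin : ∀ j, ∀ ζ ∈ V,
      inner (𝕜 := ℂ) (mvES (z j • (1 : Matrix (Fin Nh) (Fin Nh) ℂ) - cmat A) (uhatr j)) ζ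
        = inner (𝕜 := ℂ) (cvec u0 + bhat j) ζ)
    -- positive coercivity constants
    (hα : ∀ j, 0 < coer (z j • (1 : Matrix (Fin Nh) (Fin Nh) ℂ) - cmat A))
    -- uniform best-approximation bound
    (d : ℝ)
    (hd : ∀ j, (⨅ v : V, ‖uhat j - (v : EuclideanSpace ℂ (Fin Nh))‖) ≤ d) :
    ‖((c / (Complex.I * N)) • ∑ j, (Complex.exp (z j * T) * z' j) • uhat j)
      - ((c / (Complex.I * N)) • ∑ j, (Complex.exp (z j * T) * z' j) • uhatr j)‖
      ≤ d * ((c / N) * ∑ j, Real.exp ((z j).re * T) * ‖z' j‖ *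
          (1 + specNorm (z j • (1 : Matrix (Fin Nh) (Fin Nh) ℂ) - cmat A) /
            coer (z j • (1 : Matrix (Fin Nh) (Fin Nh) ℂ) - cmat A)) ) := by
  set M : Fin (N - 1) → Matrix (Fin Nh) (Fin Nh) ℂ :=
    fun j => z j • (1 : Matrix (Fin Nh) (Fin Nh) ℂ) - cmat A
  have hcea : ∀ j, ‖uhat j - uhatr j‖ ≤ (1 + specNorm (M j) / coer (M j)) * d := by
    intro j
    have hK : 0 ≤ 1 + specNorm (M j) / coer (M j) := by
      have := (hα j).le
      unfold specNorm
      positivity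
    refine (norm_sub_le_iInf_of_galerkin _ (hα j) (coer_mul_norm_sq_le (M j)) (huhatrV j)
      fun ζ hζ => ?_).trans (mul_le_mul_of_nonneg_left (hd j) hK)
    exact (hGalerkin j ζ hζ).trans (by rw [← huhat j]; rfl)
  have hweight : ∀ j, ‖Complex.exp (z j * T) * z' j‖ = Real.exp ((z j).re * T) * ‖z' j‖ :=
    fun j => by rw [norm_mul, Complex.norm_exp, Complex.re_mul_ofReal]
  have hfactor : ‖(c / (Complex.I * N) : ℂ)‖ = c / N := by simp [abs_of_pos hc]
  calc _ ≤ ‖(c / (Complex.I * N) : ℂ)‖ *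
        ∑ j, ‖Complex.exp (z j * T) * z' j‖ * ‖uhat j - uhatr j‖ :=
        norm_smul_sum_sub_smul_sum_le _ _ _ _
    _ ≤ c / N * ∑ j, Real.exp ((z j).re * T) * ‖z' j‖ *
          ((1 + specNorm (M j) / coer (M j)) * d) := by
        rw [hfactor]
        gcongr with j
        · rw [hweight]
        · exact hcea j
    _ = _ := by simp only [← mul_assoc, ← Finset.sum_mul]; ring

/-- error bound at time `T` between the trapezoidal inverse-Laplace
reconstruction from the exact Laplace-domain solutions and from their Galerkin
approximations in a fixed `N_r`-dimensional subspace `V`. -/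
theorem quadrature_galerkin_error_bound
    (Nh N Nr : ℕ) (T : ℝ) (hT : 0 < T) (c : ℝ) (hc : 0 < c)
    (z z' : Fin (N - 1) → ℂ)
    (A : Matrix (Fin Nh) (Fin Nh) ℝ)
    (u0 : EuclideanSpace ℝ (Fin Nh))
    (bhat : Fin (N - 1) → EuclideanSpace ℂ (Fin Nh))
    (V : Submodule ℂ (EuclideanSpace ℂ (Fin Nh)))
    (hV : Module.finrank ℂ V = Nr)
    (uhat uhatr : Fin (N - 1) → EuclideanSpace ℂ (Fin Nh))
    -- `û(z_j;μ)` solves `(z_j I - A(μ)) û(z_j;μ) = u₀(μ) + b̂(z_j;μ)`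
    (huhat : ∀ j, mvES (z j • (1 : Matrix (Fin Nh) (Fin Nh) ℂ) - cmat A) (uhat j)
      = cvec u0 + bhat j)
    -- `û_r(z_j;μ) ∈ V` is the Galerkin solution
    (huhatrV : ∀ j, uhatr j ∈ V)
    (hGalerkin : ∀ j, ∀ ζ ∈ V,
      inner (𝕜 := ℂ) (mvES (z j • (1 : Matrix (Fin Nh) (Fin Nh) ℂ) - cmat A) (uhatr j)) ζ
        = inner (𝕜 := ℂ) (cvec u0 + bhat j) ζ)
    -- positive coercivity constants
    (hα : ∀ j, 0 < coer (z j • (1 : Matrix (Fin Nh) (Fin Nh) ℂ) - cmat A))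
    -- uniform best-approximation bound
    (d : ℝ)
    (hd : ∀ j, (⨅ v : V, ‖uhat j - (v : EuclideanSpace ℂ (Fin Nh))‖) ≤ d) :
    ‖((c / (Complex.I * N)) • ∑ j, (Complex.exp (z j * T) * z' j) • uhat j)
      - ((c / (Complex.I * N)) • ∑ j, (Complex.exp (z j * T) * z' j) • uhatr j)‖
      ≤ d * ((c / N) * ∑ j, Real.exp ((z j).re * T) * ‖z' j‖ *
          (1 + specNorm (z j • (1 : Matrix (Fin Nh) (Fin Nh) ℂ) - cmat A) /
            coer (z j • (1 : Matrix (Fin Nh) (Fin Nh) ℂ) - cmat A)) ) :=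
  quadrature_galerkin_error_bound_general Nh N T c hc z z' A u0 bhat V uhat uhatr huhat huhatrV
    hGalerkin hα d hd
end

section
/- Let A : ℝ → ℂ^{N×M} be differentiable at μ_0, and suppose there exist functions σ : ℝ → ℝ, u : ℝ → ℂ^N, v : ℝ → ℂ^M, all differentiable at μ_0, such that in a neighborhood of μ_0: A(μ) v(μ) = σ(μ) u(μ), A(μ)* u(μ) = σ(μ) v(μ), ‖u(μ)‖ = ‖v(μ)‖ = 1, and σ(μ_0) ≠ 0 (so σ is a singular value of A with left singular vector u and right singular vector v). Then the derivative of the singular value satisfies σ'(μ_0) = Re( u(μ_0)* A'(μ_0) v(μ_0) ). -/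
/-- Action of a (rectangular) matrix on Euclidean space. -/
noncomputable def mvES' {𝕜 : Type*} [RCLike 𝕜] {m n : ℕ} (M : Matrix (Fin m) (Fin n) 𝕜)
    (v : EuclideanSpace 𝕜 (Fin n)) : EuclideanSpace 𝕜 (Fin m) := toES (M.mulVec (fromES v))

/-!
Near `μ₀` we have `σ = Re ⟪u, A v⟫`, because `A v = σ u` and `‖u‖ = 1`. Differentiating, the
terms carrying `u'` and `v'` vanish: `Re ⟪u', A v⟫ = σ Re ⟪u', u⟫` and
`Re ⟪u, A v'⟫ = Re ⟪A* u, v'⟫ = σ Re ⟪v, v'⟫`, and a curve on the unit sphere is orthogonal to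
its velocity in the real inner product. Only `Re ⟪u, A' v⟫` survives.
-/

open Filter Topology RCLike Matrix
open scoped InnerProductSpace

section UnitCurve

variable {𝕜 E : Type*} [RCLike 𝕜] [NormedAddCommGroup E] [InnerProductSpace 𝕜 E]
  [NormedSpace ℝ E] {u : ℝ → E} {u' : E} {μ0 : ℝ}

theorem HasDerivAt.re_inner_eq_zero_of_norm_eq_one (hu : HasDerivAt u u' μ0)
    (hun : ∀ᶠ μ in 𝓝 μ0, ‖u μ‖ = 1) : re ⟪u μ0, u'⟫_𝕜 = 0 := by
  have hsq : HasDerivAt (fun μ => re ⟪u μ, u μ⟫_𝕜) (re (⟪u μ0, u'⟫_𝕜 + ⟪u', u μ0⟫_𝕜)) μ0 :=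
    (reCLM (K := 𝕜)).hasFDerivAt.comp_hasDerivAt μ0 (hu.inner 𝕜 hu)
  have hone : (fun μ => re ⟪u μ, u μ⟫_𝕜) =ᶠ[𝓝 μ0] fun _ => 1 := by
    filter_upwards [hun] with μ h
    rw [inner_self_eq_norm_sq, h, one_pow]
  have hzero := (hsq.congr_of_eventuallyEq hone.symm).unique (hasDerivAt_const μ0 1)
  rw [map_add, inner_re_symm u'] at hzero
  linarith

theorem hasDerivAt_of_eventually_eq_smul_of_norm_eq_one [IsScalarTower ℝ 𝕜 E] {s : ℝ → ℝ}
    {w : ℝ → E} {w' : E} (hu : HasDerivAt u u' μ0) (hw : HasDerivAt w w' μ0)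
    (hws : ∀ᶠ μ in 𝓝 μ0, w μ = s μ • u μ) (hun : ∀ᶠ μ in 𝓝 μ0, ‖u μ‖ = 1) :
    HasDerivAt s (re ⟪u μ0, w'⟫_𝕜) μ0 := by
  have hs : (fun μ => re ⟪u μ, w μ⟫_𝕜) =ᶠ[𝓝 μ0] s := by
    filter_upwards [hws, hun] with μ hwμ huμ
    rw [hwμ, real_smul_eq_coe_smul (K := 𝕜), inner_smul_real_right, smul_re,
      inner_self_eq_norm_sq, huμ, one_pow, mul_one]
  have hderiv : HasDerivAt (fun μ => re ⟪u μ, w μ⟫_𝕜)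
      (re (⟪u μ0, w'⟫_𝕜 + ⟪u', w μ0⟫_𝕜)) μ0 :=
    (reCLM (K := 𝕜)).hasFDerivAt.comp_hasDerivAt μ0 (hu.inner 𝕜 hw)
  have hortho : re ⟪u', w μ0⟫_𝕜 = 0 := by
    rw [hws.self_of_nhds, real_smul_eq_coe_smul (K := 𝕜), inner_smul_real_right, smul_re,
      inner_re_symm, hu.re_inner_eq_zero_of_norm_eq_one hun, mul_zero]
  rw [map_add, hortho, add_zero] at hderiv
  exact hderiv.congr_of_eventuallyEq hs.symm

end UnitCurve

section MatrixAction

variable {𝕜 : Type*} [RCLike 𝕜] {m n : ℕ}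

theorem mvES'_eq_toEuclideanLin (M : Matrix (Fin m) (Fin n) 𝕜) (x : EuclideanSpace 𝕜 (Fin n)) :
    mvES' M x = M.toEuclideanLin x := rfl

theorem inner_mvES'_conjTranspose (M : Matrix (Fin m) (Fin n) 𝕜) (x : EuclideanSpace 𝕜 (Fin m))
    (y : EuclideanSpace 𝕜 (Fin n)) : ⟪x, mvES' M y⟫_𝕜 = ⟪mvES' M.conjTranspose x, y⟫_𝕜 := by
  rw [mvES'_eq_toEuclideanLin, mvES'_eq_toEuclideanLin, toEuclideanLin_conjTranspose_eq_adjoint,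
    LinearMap.adjoint_inner_left]

theorem HasDerivAt.mvES' {A : ℝ → Matrix (Fin m) (Fin n) 𝕜} {A' : Matrix (Fin m) (Fin n) 𝕜}
    {v : ℝ → EuclideanSpace 𝕜 (Fin n)} {v' : EuclideanSpace 𝕜 (Fin n)} {μ0 : ℝ}
    (hA : ∀ i j, HasDerivAt (fun μ => A μ i j) (A' i j) μ0) (hv : HasDerivAt v v' μ0) :
    HasDerivAt (fun μ => mvES' (A μ) (v μ)) (mvES' A' (v μ0) + mvES' (A μ0) v') μ0 := by
  have hvj : ∀ j, HasDerivAt (fun μ => v μ j) (v' j) μ0 := fun j =>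
    (PiLp.hasFDerivAt_apply (𝕜 := ℝ) 2 (v μ0) j).comp_hasDerivAt μ0 hv
  have hcoord : HasDerivAt (fun μ => A μ *ᵥ fromES (v μ))
      (A' *ᵥ fromES (v μ0) + A μ0 *ᵥ fromES v') μ0 :=
    hasDerivAt_pi.2 fun i => by
      simpa only [mulVec, dotProduct, fromES, WithLp.equiv_apply, Pi.add_apply,
        ← Finset.sum_add_distrib] using
        HasDerivAt.fun_sum (u := Finset.univ) fun j _ => (hA i j).fun_mul (hvj j)
  exact (PiLp.hasFDerivAt_toLp (𝕜 := ℝ) 2 _).comp_hasDerivAt μ0 hcoord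

end MatrixAction

theorem singular_value_derivative_general
    (N M : ℕ)
    (A : ℝ → Matrix (Fin N) (Fin M) ℂ) (A' : Matrix (Fin N) (Fin M) ℂ) (μ0 : ℝ)
    (hA : ∀ i j, HasDerivAt (fun μ => A μ i j) (A' i j) μ0)
    (σ : ℝ → ℝ) (σ' : ℝ) (hσ : HasDerivAt σ σ' μ0)
    (u : ℝ → EuclideanSpace ℂ (Fin N)) (u' : EuclideanSpace ℂ (Fin N))
    (hu : HasDerivAt u u' μ0)
    (v : ℝ → EuclideanSpace ℂ (Fin M)) (v' : EuclideanSpace ℂ (Fin M))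
    (hv : HasDerivAt v v' μ0)
    -- in a neighborhood of `μ₀`: `A v = σ u`, `A* u = σ v`, `‖u‖ = ‖v‖ = 1`
    (hAv : ∀ᶠ μ in nhds μ0, mvES' (A μ) (v μ) = σ μ • u μ)
    (hAu : ∀ᶠ μ in nhds μ0, mvES' (A μ).conjTranspose (u μ) = σ μ • v μ)
    (hun : ∀ᶠ μ in nhds μ0, ‖u μ‖ = 1)
    (hvn : ∀ᶠ μ in nhds μ0, ‖v μ‖ = 1) :
    σ' = (inner (𝕜 := ℂ) (u μ0) (mvES' A' (v μ0))).re := by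
  have hσ_inner := hasDerivAt_of_eventually_eq_smul_of_norm_eq_one (𝕜 := ℂ) hu
    (HasDerivAt.mvES' hA hv) hAv hun
  have hv_term : re ⟪u μ0, mvES' (A μ0) v'⟫_ℂ = 0 := by
    rw [inner_mvES'_conjTranspose, hAu.self_of_nhds, real_smul_eq_coe_smul (K := ℂ),
      inner_smul_real_left, smul_re, hv.re_inner_eq_zero_of_norm_eq_one hvn, mul_zero]
  rw [hσ.unique hσ_inner, inner_add_right, map_add, hv_term, add_zero]
  rfl

/-- derivative of a (nonzero, smoothly parametrized) singular value:
`σ'(μ₀) = Re(u(μ₀)* A'(μ₀) v(μ₀))`. -/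
theorem singular_value_derivative
    (N M : ℕ)
    (A : ℝ → Matrix (Fin N) (Fin M) ℂ) (A' : Matrix (Fin N) (Fin M) ℂ) (μ0 : ℝ)
    (hA : ∀ i j, HasDerivAt (fun μ => A μ i j) (A' i j) μ0)
    (σ : ℝ → ℝ) (σ' : ℝ) (hσ : HasDerivAt σ σ' μ0)
    (u : ℝ → EuclideanSpace ℂ (Fin N)) (u' : EuclideanSpace ℂ (Fin N))
    (hu : HasDerivAt u u' μ0)
    (v : ℝ → EuclideanSpace ℂ (Fin M)) (v' : EuclideanSpace ℂ (Fin M))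
    (hv : HasDerivAt v v' μ0)
    -- in a neighborhood of `μ₀`: `A v = σ u`, `A* u = σ v`, `‖u‖ = ‖v‖ = 1`
    (hAv : ∀ᶠ μ in nhds μ0, mvES' (A μ) (v μ) = σ μ • u μ)
    (hAu : ∀ᶠ μ in nhds μ0, mvES' (A μ).conjTranspose (u μ) = σ μ • v μ)
    (hun : ∀ᶠ μ in nhds μ0, ‖u μ‖ = 1)
    (hvn : ∀ᶠ μ in nhds μ0, ‖v μ‖ = 1)
    (hσ0 : σ μ0 ≠ 0) :
    σ' = (inner (𝕜 := ℂ) (u μ0) (mvES' A' (v μ0))).re :=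
  singular_value_derivative_general N M A A' μ0 hA σ σ' hσ u u' hu v v' hv hAv hAu hun hvn
end

section
/- Let z(s) = −s² − 2 i a s + a₂ with a, a₂ ∈ ℝ be the parabolic contour parametrization, let T > 0, δ > 0, and set s_j = jδ for j ∈ ℕ. Let G : ℝ → ℂ^{N_h} satisfy ‖G(s)‖ ≤ K for all s ≥ 0. Then there exist constants c₀ > 0 and c₁ > 0, depending on K, T, δ, a, a₂ but not on M, such that the tail of the trapezoidal sum of the inverse-Laplace quadrature satisfies ‖ Σ_{j=M+1}^{∞} e^{z(s_j) T} G(s_j) z'(s_j) δ ‖ ≤ c₀ e^{−c₁ M²} for every M ∈ ℕ. -/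
/-!
On the contour `z(s) = -s² - 2ias + a₂` one has `|e^{z(s)T}| = e^{(a₂ - s²)T}` and
`|z'(s)| ≤ 2(s + |a|)`. For `j > M` we have `j² ≥ (M² + j)/2`, so with `c = δ²T` the `j`-th
term is at most `e^{-cM²/2}` times `e^{a₂T} δ K (2δj + 2|a|) e^{-cj/2}`, an
arithmetico-geometric sequence whose sum over all of `ℕ` is a constant independent of `M`.
-/

open Complex

lemma norm_tsum_subtype_le_tsum {ι E : Type*} [SeminormedAddCommGroup E] (s : Set ι)
    {f : ι → E} {g : ι → ℝ} (hg : Summable g) (hg0 : ∀ i, 0 ≤ g i)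
    (hfg : ∀ i ∈ s, ‖f i‖ ≤ g i) :
    ‖∑' i : s, f i‖ ≤ ∑' i, g i :=
  (tsum_of_norm_bounded (hg.subtype s).hasSum fun i => hfg i.1 i.2).trans
    (hg.tsum_subtype_le g s hg0)

lemma summable_affine_mul_geometric (α β : ℝ) {r : ℝ} (hr0 : 0 ≤ r) (hr1 : r < 1) :
    Summable fun n : ℕ => (α * n + β) * r ^ n := by
  have hr : ‖r‖ < 1 := by rwa [Real.norm_of_nonneg hr0]
  have hlin : Summable fun n : ℕ => (n : ℝ) * r ^ n := by
    simpa using summable_pow_mul_geometric_of_norm_lt_one 1 hr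
  simpa only [add_mul, mul_assoc] using
    (hlin.mul_left α).add ((summable_geometric_of_lt_one hr0 hr1).mul_left β)

lemma norm_exp_parabolicContour_mul (a a2 T s : ℝ) :
    ‖exp ((-(s : ℂ) ^ 2 - 2 * I * a * s + a2) * T)‖ = Real.exp ((a2 - s ^ 2) * T) := by
  rw [norm_exp]
  congr 1
  simp [sq, sub_eq_neg_add]

lemma norm_deriv_parabolicContour_le (a s : ℝ) :
    ‖-2 * (s : ℂ) - 2 * I * a‖ ≤ 2 * |s| + 2 * |a| :=
  (norm_sub_le _ _).trans_eq (by simp)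

lemma norm_parabolicContour_summand_le {E : Type*} [SeminormedAddCommGroup E]
    [NormedSpace ℂ E] (a a2 T δ s : ℝ) (hδ : 0 ≤ δ) (hs : 0 ≤ s) (v : E) :
    ‖(exp ((-(s : ℂ) ^ 2 - 2 * I * a * s + a2) * T) * (-2 * (s : ℂ) - 2 * I * a) * δ)
        • v‖
      ≤ Real.exp ((a2 - s ^ 2) * T) * (2 * s + 2 * |a|) * δ * ‖v‖ := by
  rw [norm_smul, norm_mul, norm_mul, norm_exp_parabolicContour_mul, norm_real,
    Real.norm_of_nonneg hδ]
  have hderiv := norm_deriv_parabolicContour_le a s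
  rw [abs_of_nonneg hs] at hderiv
  gcongr

lemma exp_neg_mul_sq_le_of_lt {c : ℝ} (hc : 0 ≤ c) {M j : ℕ} (hMj : M < j) :
    Real.exp (-c * j ^ 2) ≤ Real.exp (-(c / 2) * M ^ 2) * Real.exp (-(c / 2)) ^ j := by
  rw [← Real.exp_nat_mul, ← Real.exp_add]
  have hM : (M : ℝ) + 1 ≤ j := by exact_mod_cast hMj
  have hM0 : (0 : ℝ) ≤ M := M.cast_nonneg
  have hsq : (M : ℝ) ^ 2 + j ≤ 2 * j ^ 2 := by nlinarith
  gcongr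
  nlinarith [mul_le_mul_of_nonneg_left hsq hc]

lemma norm_parabolicContour_summand_le_of_lt {E : Type*} [SeminormedAddCommGroup E]
    [NormedSpace ℂ E] (a a2 T δ K : ℝ) (hT : 0 ≤ T) (hδ : 0 ≤ δ) {v : E} (hv : ‖v‖ ≤ K)
    {M j : ℕ} (hMj : M < j) :
    ‖(exp ((-((j : ℝ) * δ : ℂ) ^ 2 - 2 * I * a * ((j : ℝ) * δ : ℂ) + a2) * T)
        * (-2 * ((j : ℝ) * δ : ℂ) - 2 * I * a) * δ) • v‖
      ≤ Real.exp (-(δ ^ 2 * T / 2) * M ^ 2) * (Real.exp (a2 * T) * δ * K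
          * ((2 * δ * j + 2 * |a|) * Real.exp (-(δ ^ 2 * T / 2)) ^ j)) := by
  have h := norm_parabolicContour_summand_le a a2 T δ (j * δ) hδ (by positivity) v
  push_cast at h
  set c := δ ^ 2 * T
  have hexp :
      Real.exp ((a2 - (j * δ) ^ 2) * T) = Real.exp (a2 * T) * Real.exp (-c * j ^ 2) := by
    rw [← Real.exp_add]; congr 1; ring
  have hgauss := exp_neg_mul_sq_le_of_lt (by positivity : 0 ≤ c) hMj
  have hK : 0 ≤ K := (norm_nonneg v).trans hv
  calc _ ≤ Real.exp (a2 * T) * Real.exp (-c * j ^ 2) * (2 * (j * δ) + 2 * |a|) * δ * K := by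
        rw [← hexp]; refine h.trans ?_; gcongr
    _ ≤ Real.exp (a2 * T) * (Real.exp (-(c / 2) * M ^ 2) * Real.exp (-(c / 2)) ^ j)
          * (2 * (j * δ) + 2 * |a|) * δ * K := by gcongr
    _ = _ := by ring

/-- Gaussian decay of the tail of the trapezoidal sum of the
inverse-Laplace quadrature along the parabolic contour `z(s) = -s² - 2ias + a₂`:
there are `c₀, c₁ > 0`, independent of `M`, with
`‖Σ_{j>M} e^{z(s_j)T} G(s_j) z'(s_j) δ‖ ≤ c₀ e^{-c₁ M²}`. -/
theorem parabolic_contour_quadrature_tail_bound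
    (Nh : ℕ) (a a2 T δ K : ℝ) (hT : 0 < T) (hδ : 0 < δ)
    (G : ℝ → EuclideanSpace ℂ (Fin Nh))
    (hG : ∀ s : ℝ, 0 ≤ s → ‖G s‖ ≤ K) :
    ∃ c0 > (0 : ℝ), ∃ c1 > (0 : ℝ), ∀ M : ℕ,
      ‖∑' j : {j : ℕ // M < j},
          (Complex.exp ((-(((j : ℕ) : ℝ) * δ : ℂ) ^ 2
              - 2 * Complex.I * a * (((j : ℕ) : ℝ) * δ : ℂ) + (a2 : ℂ)) * (T : ℂ))
            * (-2 * (((j : ℕ) : ℝ) * δ : ℂ) - 2 * Complex.I * a) * (δ : ℂ))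
            • G (((j : ℕ) : ℝ) * δ)‖
        ≤ c0 * Real.exp (-c1 * (M : ℝ) ^ 2) := by
  have hK : 0 ≤ K := (norm_nonneg _).trans (hG 0 le_rfl)
  set c1 := δ ^ 2 * T / 2
  have hc1 : 0 < c1 := by positivity
  set r := Real.exp (-c1)
  have hr1 : r < 1 := Real.exp_lt_one_iff.mpr (by linarith)
  set g : ℕ → ℝ := fun j => Real.exp (a2 * T) * δ * K * ((2 * δ * j + 2 * |a|) * r ^ j)
  have hg : Summable g :=
    (summable_affine_mul_geometric _ _ (Real.exp_pos _).le hr1).mul_left _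
  refine ⟨max (∑' j, g j) 1, by positivity, c1, hc1, fun M => ?_⟩
  calc _ ≤ ∑' j, Real.exp (-c1 * M ^ 2) * g j :=
        norm_tsum_subtype_le_tsum {j | M < j} (hg.mul_left _) (fun j => by positivity)
          fun j hj => norm_parabolicContour_summand_le_of_lt a a2 T δ K hT.le hδ.le
            (hG (j * δ) (by positivity)) hj
    _ = Real.exp (-c1 * M ^ 2) * ∑' j, g j := tsum_mul_left
    _ ≤ _ := by rw [mul_comm]; gcongr; exact le_max_left _ _
end
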